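/- Fix an integer n ≥ 1, masses m₁, m₂ > 0, exponents γ₁, γ₂ with 1 < γ_i ≤ 2, and constants 0 < λ ≤ Λ. There exists a constant C, depending only on λ, Λ, m₁, m₂, γ₁, γ₂, such that for all n₁, n₂ ∈ [λ, Λ] and all ν₁, ν₂ ≥ 0 with ρ_V := m₁ν₁ + m₂ν₂ > 0, setting ρ_U := m₁n₁ + m₂n₂, one has ( n₁/ρ_U − ν₁/ρ_V )² · ρ_V ≤ C ( s₁(ν₁|n₁) + s₂(ν₂|n₂) ), and symmetrically ( n₂/ρ_U − ν₂/ρ_V )² · ρ_V ≤ C ( s₁(ν₁|n₁) + s₂(ν₂|n₂) ). -/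

import Mathlib

/-- The isentropic internal-energy function `s(x) = m^{n(γ−1)/2} x^γ/(γ−1)`. -/
noncomputable def sFn (n : ℕ) (m γ : ℝ) (x : ℝ) : ℝ :=
  m ^ ((n : ℝ) * (γ - 1) / 2) * x ^ γ / (γ - 1)

/-- Its derivative `s′(x) = γ m^{n(γ−1)/2} x^{γ−1}/(γ−1)`. -/
noncomputable def sFn' (n : ℕ) (m γ : ℝ) (x : ℝ) : ℝ :=
  γ * m ^ ((n : ℝ) * (γ - 1) / 2) * x ^ (γ - 1) / (γ - 1)

/-- The relative quantity `s(y|x) = s(y) − s(x) − s′(x)(y − x)`. -/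
noncomputable def sRel (n : ℕ) (m γ : ℝ) (y x : ℝ) : ℝ :=
  sFn n m γ y - sFn n m γ x - sFn' n m γ x * (y - x)

/-!
With `A = n₁ν₂ − n₂ν₁` one has `n₁ V − ν₁ U = m₂ A` and `n₂ V − ν₂ U = −m₁ A` for
`U = ρ_U`, `V = ρ_V`, so both claims reduce to `A² ≲ ρ_V (s₁(ν₁|n₁) + s₂(ν₂|n₂))`.
Since `γ ≤ 2`, `s''(t) ∝ t^{γ−2}` is decreasing, so between `n` and `ν` it is at least a multiple
of `max(ν, n)^{γ−2}`; this gives the uniform bound `s(ν|n) ≳ (ν − n)²/(1 + ν)` for `0 ≤ n ≤ Λ`. On the other side,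
`A = n₁(ν₂ − n₂) − n₂(ν₁ − n₁)` is controlled by the larger deviation `|νᵢ − nᵢ|`, and
`|A| ≤ Λ(ν₁ + ν₂) ≲ ρ_V`; since `nᵢ ≥ λ`, either that deviation is at least `λ/2` or
`νᵢ ≥ λ/2`, and in both cases `A² (1 + νᵢ) ≲ ρ_V (νᵢ − nᵢ)²`.
-/

open Real Set

lemma mul_rpow_sub_one_mul_sub_le_rpow_sub_rpow {β x y : ℝ} (hβ₀ : 0 < β) (hβ₁ : β ≤ 1)
    (hx : 0 ≤ x) (hxy : x ≤ y) :
    β * y ^ (β - 1) * (y - x) ≤ y ^ β - x ^ β := by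
  rcases hxy.eq_or_lt with rfl | hlt
  · simp
  have hy : 0 < y := hx.trans_lt hlt
  have hslope := (concaveOn_rpow hβ₀.le hβ₁).le_slope_of_hasDerivAt (mem_Ici.2 hx)
    (mem_Ici.2 hy.le) hlt (hasDerivAt_rpow_const (Or.inl hy.ne'))
  rwa [slope_def_field, le_div_iff₀ (sub_pos.2 hlt)] at hslope

lemma mul_rpow_mul_sq_le_rpow_sub_rpow_sub {γ M x y : ℝ} (hγ₁ : 1 < γ) (hγ₂ : γ ≤ 2)
    (hx : 0 ≤ x) (hy : 0 ≤ y) (hxM : x ≤ M) (hyM : y ≤ M) :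
    γ * (γ - 1) / 2 * M ^ (γ - 2) * (y - x) ^ 2 ≤ y ^ γ - x ^ γ - γ * x ^ (γ - 1) * (y - x) := by
  set h : ℝ → ℝ := fun t ↦
    t ^ γ - γ * x ^ (γ - 1) * t - γ * (γ - 1) / 2 * M ^ (γ - 2) * (t - x) ^ 2 with h_def
  have hh : ∀ t, HasDerivAt h
      (γ * (t ^ (γ - 1) - x ^ (γ - 1) - (γ - 1) * M ^ (γ - 2) * (t - x))) t := fun t ↦ by
    refine (((hasDerivAt_rpow_const (x := t) (Or.inr hγ₁.le)).sub
      ((hasDerivAt_id t).const_mul (γ * x ^ (γ - 1)))).sub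
      ((((hasDerivAt_id t).sub_const x).pow 2).const_mul
        (γ * (γ - 1) / 2 * M ^ (γ - 2)))).congr_deriv ?_
    simp only [id, Nat.cast_ofNat]
    ring
  -- the tangent-line bound for the concave `t ↦ t ^ (γ - 1)` controls the sign of `h'`
  have htangent : ∀ {s t : ℝ}, 0 ≤ s → s ≤ t →
      (γ - 1) * t ^ (γ - 2) * (t - s) ≤ t ^ (γ - 1) - s ^ (γ - 1) := fun hs hst ↦ by
    simpa [show γ - 1 - 1 = γ - 2 by ring] using
      mul_rpow_sub_one_mul_sub_le_rpow_sub_rpow (β := γ - 1) (by linarith) (by linarith) hs hst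
  have hM : ∀ {t : ℝ}, 0 < t → t ≤ M → M ^ (γ - 2) ≤ t ^ (γ - 2) := fun ht htM ↦
    rpow_le_rpow_of_nonpos ht htM (by linarith)
  suffices h x ≤ h y by
    simp only [h_def] at this
    linear_combination this
  rcases le_total x y with hxy | hyx
  · refine monotoneOn_of_hasDerivWithinAt_nonneg (convex_Icc x y)
      (fun t _ ↦ (hh t).continuousAt.continuousWithinAt)
      (fun t _ ↦ (hh t).hasDerivWithinAt) (fun t ht ↦ ?_) (left_mem_Icc.2 hxy)
      (right_mem_Icc.2 hxy) hxy
    rw [interior_Icc] at ht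
    have hMt := mul_le_mul_of_nonneg_right (hM (hx.trans_lt ht.1) (ht.2.le.trans hyM))
      (sub_nonneg.2 ht.1.le)
    refine mul_nonneg (by linarith) ?_
    nlinarith [htangent hx ht.1.le]
  · refine antitoneOn_of_hasDerivWithinAt_nonpos (convex_Icc y x)
      (fun t _ ↦ (hh t).continuousAt.continuousWithinAt)
      (fun t _ ↦ (hh t).hasDerivWithinAt) (fun t ht ↦ ?_) (left_mem_Icc.2 hyx)
      (right_mem_Icc.2 hyx) hyx
    rw [interior_Icc] at ht
    have ht0 : 0 < t := hy.trans_lt ht.1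
    have hMx := mul_le_mul_of_nonneg_right (hM (ht0.trans ht.2) hxM) (sub_nonneg.2 ht.2.le)
    refine mul_nonpos_of_nonneg_of_nonpos (by linarith) ?_
    nlinarith [htangent ht0.le ht.2.le]

lemma sRel_eq_mul (n : ℕ) (m γ y x : ℝ) :
    sRel n m γ y x = m ^ ((n : ℝ) * (γ - 1) / 2) / (γ - 1) *
      (y ^ γ - x ^ γ - γ * x ^ (γ - 1) * (y - x)) := by
  simp only [sRel, sFn, sFn']
  ring

lemma mul_sq_le_sRel (n : ℕ) {m γ M x y : ℝ} (hm : 0 < m) (hγ₁ : 1 < γ) (hγ₂ : γ ≤ 2)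
    (hx : 0 ≤ x) (hy : 0 ≤ y) (hxM : x ≤ M) (hyM : y ≤ M) :
    m ^ ((n : ℝ) * (γ - 1) / 2) * γ / 2 * M ^ (γ - 2) * (y - x) ^ 2 ≤ sRel n m γ y x := by
  have hγ : 0 < γ - 1 := sub_pos.2 hγ₁
  rw [sRel_eq_mul]
  calc m ^ ((n : ℝ) * (γ - 1) / 2) * γ / 2 * M ^ (γ - 2) * (y - x) ^ 2
      = m ^ ((n : ℝ) * (γ - 1) / 2) / (γ - 1) *
          (γ * (γ - 1) / 2 * M ^ (γ - 2) * (y - x) ^ 2) := by field_simp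
    _ ≤ _ := by
      gcongr
      exact mul_rpow_mul_sq_le_rpow_sub_rpow_sub hγ₁ hγ₂ hx hy hxM hyM

lemma exists_mul_sq_sub_le_one_add_mul_sRel (n : ℕ) {m γ : ℝ} (ub : ℝ) (hm : 0 < m)
    (hγ₁ : 1 < γ) (hγ₂ : γ ≤ 2) :
    ∃ c > 0, ∀ x y, 0 ≤ x → x ≤ ub → 0 ≤ y → c * (y - x) ^ 2 ≤ (1 + y) * sRel n m γ y x := by
  set K := max 1 ub
  have hK : 1 ≤ K := le_max_left 1 ub
  refine ⟨m ^ ((n : ℝ) * (γ - 1) / 2) * γ / (2 * K), by positivity, fun x y hx hxu hy ↦ ?_⟩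
  have hM : 1 ≤ K * (1 + y) := by nlinarith
  have hMpow : (K * (1 + y))⁻¹ ≤ (K * (1 + y)) ^ (γ - 2) := by
    rw [← rpow_neg_one]
    exact rpow_le_rpow_of_exponent_le hM (by linarith)
  have hsRel := mul_sq_le_sRel n hm hγ₁ hγ₂ hx hy (M := K * (1 + y))
    ((le_max_right 1 ub).trans' hxu |>.trans (by nlinarith)) (by nlinarith)
  calc m ^ ((n : ℝ) * (γ - 1) / 2) * γ / (2 * K) * (y - x) ^ 2
      = (1 + y) * (m ^ ((n : ℝ) * (γ - 1) / 2) * γ / 2 * (K * (1 + y))⁻¹ * (y - x) ^ 2) := by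
        field_simp
    _ ≤ (1 + y) * sRel n m γ y x := by
      gcongr
      exact hsRel.trans' (by gcongr)

lemma mul_sq_le_of_abs_le {c lb ub x y w A s : ℝ} (hc : 0 ≤ c) (hlb : 0 < lb) (hx : lb ≤ x)
    (hy : 0 ≤ y) (hyw : y ≤ w) (hAw : |A| ≤ ub * w) (hAd : |A| ≤ 2 * ub * |y - x|)
    (hs : c * (y - x) ^ 2 ≤ (1 + y) * s) :
    c * lb * A ^ 2 ≤ 4 * ub ^ 2 * (lb + 2) * w * s := by
  have hw : 0 ≤ w := hy.trans hyw
  have hA_sq : A ^ 2 ≤ 4 * ub ^ 2 * (y - x) ^ 2 := by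
    have := pow_le_pow_left₀ (abs_nonneg A) hAd 2
    rw [sq_abs, mul_pow, sq_abs] at this
    linarith
  have hlb_A : lb * A ^ 2 ≤ 8 * ub ^ 2 * w * (y - x) ^ 2 := by
    rcases le_or_gt (lb / 2) |y - x| with hfar | hnear
    · have hA_mul : A ^ 2 ≤ ub * w * (2 * ub * |y - x|) := by
        rw [← sq_abs, sq]
        exact mul_le_mul hAw hAd (abs_nonneg A) (hAw.trans' (abs_nonneg A))
      have hd : |y - x| * |y - x| = (y - x) ^ 2 := by rw [← sq, sq_abs]
      have hcoef : 0 ≤ 2 * ub ^ 2 * w * |y - x| := by positivity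
      nlinarith [mul_le_mul_of_nonneg_left hA_mul hlb.le, mul_le_mul_of_nonneg_left hfar hcoef]
    · have hwlb : lb ≤ 2 * w := by
        have := (abs_lt.1 hnear).1
        linarith
      nlinarith [sq_nonneg A, sq_nonneg (y - x)]
  have hkey : lb * A ^ 2 * (1 + y) ≤ 4 * ub ^ 2 * (lb + 2) * w * (y - x) ^ 2 := by
    nlinarith [mul_le_mul hyw hA_sq (sq_nonneg A) hw]
  have hy1 : 0 < 1 + y := by linarith
  refine le_of_mul_le_mul_right ?_ hy1
  calc c * lb * A ^ 2 * (1 + y) = c * (lb * A ^ 2 * (1 + y)) := by ring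
    _ ≤ c * (4 * ub ^ 2 * (lb + 2) * w * (y - x) ^ 2) := by gcongr
    _ = 4 * ub ^ 2 * (lb + 2) * w * (c * (y - x) ^ 2) := by ring
    _ ≤ 4 * ub ^ 2 * (lb + 2) * w * ((1 + y) * s) := by gcongr
    _ = 4 * ub ^ 2 * (lb + 2) * w * s * (1 + y) := by ring

lemma mul_sq_sub_mul_le {c lb ub m m₁ m₂ n₁ n₂ ν₁ ν₂ s₁ s₂ : ℝ} (hc : 0 ≤ c) (hlb : 0 < lb)
    (hm : 0 ≤ m) (hm₁ : m ≤ m₁) (hm₂ : m ≤ m₂)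
    (hn₁ : lb ≤ n₁) (hn₁' : n₁ ≤ ub) (hn₂ : lb ≤ n₂) (hn₂' : n₂ ≤ ub) (hν₁ : 0 ≤ ν₁)
    (hν₂ : 0 ≤ ν₂) (hs₁ : c * (ν₁ - n₁) ^ 2 ≤ (1 + ν₁) * s₁)
    (hs₂ : c * (ν₂ - n₂) ^ 2 ≤ (1 + ν₂) * s₂) :
    c * lb * m * (n₁ * ν₂ - n₂ * ν₁) ^ 2 ≤
      4 * ub ^ 2 * (lb + 2) * (m₁ * ν₁ + m₂ * ν₂) * (s₁ + s₂) := by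
  have hs₁0 : 0 ≤ s₁ := nonneg_of_mul_nonneg_right
    ((mul_nonneg hc (sq_nonneg _)).trans hs₁) (by linarith)
  have hs₂0 : 0 ≤ s₂ := nonneg_of_mul_nonneg_right
    ((mul_nonneg hc (sq_nonneg _)).trans hs₂) (by linarith)
  have hAw : |n₁ * ν₂ - n₂ * ν₁| ≤ ub * (ν₁ + ν₂) := by
    rw [abs_le]
    constructor <;> nlinarith
  have hAd : |n₁ * ν₂ - n₂ * ν₁| ≤ ub * (|ν₁ - n₁| + |ν₂ - n₂|) := by
    rw [show n₁ * ν₂ - n₂ * ν₁ = n₁ * (ν₂ - n₂) - n₂ * (ν₁ - n₁) by ring]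
    refine (abs_sub _ _).trans ?_
    rw [abs_mul, abs_mul, abs_of_pos (hlb.trans_le hn₁), abs_of_pos (hlb.trans_le hn₂)]
    nlinarith [abs_nonneg (ν₁ - n₁), abs_nonneg (ν₂ - n₂)]
  have hub : 0 ≤ ub := by linarith
  set K := 4 * ub ^ 2 * (lb + 2)
  have hK : 0 ≤ K := by positivity
  have hcross : c * lb * (n₁ * ν₂ - n₂ * ν₁) ^ 2 ≤ K * (ν₁ + ν₂) * (s₁ + s₂) := by
    rcases le_total |ν₂ - n₂| |ν₁ - n₁| with h | h
    · calc _ ≤ K * (ν₁ + ν₂) * s₁ :=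
            mul_sq_le_of_abs_le hc hlb hn₁ hν₁ (by linarith) hAw (by nlinarith) hs₁
        _ ≤ _ := by gcongr; linarith
    · rw [show n₁ * ν₂ - n₂ * ν₁ = -(n₂ * ν₁ - n₁ * ν₂) by ring, neg_sq] at *
      calc _ ≤ K * (ν₁ + ν₂) * s₂ :=
            mul_sq_le_of_abs_le hc hlb hn₂ hν₂ (by linarith) (by rwa [abs_neg] at hAw)
              (by rw [abs_neg] at hAd; nlinarith) hs₂
        _ ≤ _ := by gcongr; linarith
  have hmass : m * (ν₁ + ν₂) ≤ m₁ * ν₁ + m₂ * ν₂ := by nlinarith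
  calc c * lb * m * (n₁ * ν₂ - n₂ * ν₁) ^ 2 = m * (c * lb * (n₁ * ν₂ - n₂ * ν₁) ^ 2) := by ring
    _ ≤ m * (K * (ν₁ + ν₂) * (s₁ + s₂)) := by gcongr
    _ = K * (m * (ν₁ + ν₂)) * (s₁ + s₂) := by ring
    _ ≤ K * (m₁ * ν₁ + m₂ * ν₂) * (s₁ + s₂) := by gcongr

lemma sq_div_sub_div_mul_le {m u v U V A c K S μ ρ : ℝ} (hV : 0 < V) (hρ : 0 < ρ)
    (hρU : ρ ≤ U) (hmμ : m ^ 2 ≤ μ) (hc : 0 < c) (hA : c * A ^ 2 ≤ K * V * S)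
    (h : u * V - U * v = m * A) :
    (u / U - v / V) ^ 2 * V ≤ μ * K / (c * ρ ^ 2) * S := by
  have hU : 0 < U := hρ.trans_le hρU
  have hKVS : 0 ≤ K * V * S := (mul_nonneg hc.le (sq_nonneg A)).trans hA
  have hμ : 0 ≤ μ := (sq_nonneg m).trans hmμ
  calc (u / U - v / V) ^ 2 * V = m ^ 2 * (c * A ^ 2) / (c * U ^ 2 * V) := by
        rw [div_sub_div _ _ hU.ne' hV.ne', h]; field_simp
    _ ≤ μ * (K * V * S) / (c * ρ ^ 2 * V) := by gcongr
    _ = μ * K / (c * ρ ^ 2) * S := by field_simp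

theorem density_fraction_difference_le_relative_pressure_general (n : ℕ)
    (m₁ m₂ γ₁ γ₂ lb ub : ℝ) (hm₁ : 0 < m₁) (hm₂ : 0 < m₂)
    (hγ₁ : 1 < γ₁) (hγ₁' : γ₁ ≤ 2) (hγ₂ : 1 < γ₂) (hγ₂' : γ₂ ≤ 2)
    (hlb : 0 < lb) (hlu : lb ≤ ub) :
    ∃ C : ℝ, 0 < C ∧
      ∀ n₁ n₂ ν₁ ν₂ : ℝ, lb ≤ n₁ → n₁ ≤ ub → lb ≤ n₂ → n₂ ≤ ub →
        0 ≤ ν₁ → 0 ≤ ν₂ → 0 < m₁ * ν₁ + m₂ * ν₂ →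
        (n₁ / (m₁ * n₁ + m₂ * n₂) - ν₁ / (m₁ * ν₁ + m₂ * ν₂)) ^ 2 *
            (m₁ * ν₁ + m₂ * ν₂) ≤
          C * (sRel n m₁ γ₁ ν₁ n₁ + sRel n m₂ γ₂ ν₂ n₂) ∧
        (n₂ / (m₁ * n₁ + m₂ * n₂) - ν₂ / (m₁ * ν₁ + m₂ * ν₂)) ^ 2 *
            (m₁ * ν₁ + m₂ * ν₂) ≤
          C * (sRel n m₁ γ₁ ν₁ n₁ + sRel n m₂ γ₂ ν₂ n₂) := by
  obtain ⟨c₁, hc₁, hs₁⟩ := exists_mul_sq_sub_le_one_add_mul_sRel n ub hm₁ hγ₁ hγ₁'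
  obtain ⟨c₂, hc₂, hs₂⟩ := exists_mul_sq_sub_le_one_add_mul_sRel n ub hm₂ hγ₂ hγ₂'
  obtain ⟨c, hc, hcc₁, hcc₂⟩ : ∃ c, 0 < c ∧ c ≤ c₁ ∧ c ≤ c₂ :=
    ⟨min c₁ c₂, lt_min hc₁ hc₂, min_le_left _ _, min_le_right _ _⟩
  obtain ⟨m, hm, hmm₁, hmm₂⟩ : ∃ m, 0 < m ∧ m ≤ m₁ ∧ m ≤ m₂ :=
    ⟨min m₁ m₂, lt_min hm₁ hm₂, min_le_left _ _, min_le_right _ _⟩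
  have hub : 0 < ub := hlb.trans_le hlu
  refine ⟨max m₁ m₂ ^ 2 * (4 * ub ^ 2 * (lb + 2)) / (c * lb * m * ((m₁ + m₂) * lb) ^ 2),
    by positivity, fun n₁ n₂ ν₁ ν₂ hn₁ hn₁' hn₂ hn₂' hν₁ hν₂ hV ↦ ?_⟩
  have hA := mul_sq_sub_mul_le hc.le hlb hm.le hmm₁ hmm₂ hn₁ hn₁' hn₂ hn₂' hν₁ hν₂
    ((hs₁ n₁ ν₁ (by linarith) hn₁' hν₁).trans' (by gcongr))
    ((hs₂ n₂ ν₂ (by linarith) hn₂' hν₂).trans' (by gcongr))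
  have hU : (m₁ + m₂) * lb ≤ m₁ * n₁ + m₂ * n₂ := by nlinarith
  have hclm : 0 < c * lb * m := by positivity
  constructor
  · exact sq_div_sub_div_mul_le hV (by positivity) hU
      (pow_le_pow_left₀ hm₂.le (le_max_right _ _) 2) hclm hA (by ring)
  · exact sq_div_sub_div_mul_le (m := -m₁) hV (by positivity) hU
      (by rw [neg_sq]; exact pow_le_pow_left₀ hm₁.le (le_max_left _ _) 2) hclm hA (by ring)

/-- For `n ≥ 1`, masses `m₁, m₂ > 0`, exponents `1 < γᵢ ≤ 2` and
`0 < λ ≤ Λ`, there is `C` (depending only on these data) such that for all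
`n₁, n₂ ∈ [λ, Λ]` and `ν₁, ν₂ ≥ 0` with `ρ_V = m₁ν₁ + m₂ν₂ > 0`, both
`(n₁/ρ_U − ν₁/ρ_V)² ρ_V ≤ C (s₁(ν₁|n₁) + s₂(ν₂|n₂))` and the symmetric bound
hold, where `ρ_U = m₁n₁ + m₂n₂`. -/
theorem density_fraction_difference_le_relative_pressure (n : ℕ) (hn : 1 ≤ n)
    (m₁ m₂ γ₁ γ₂ lb ub : ℝ) (hm₁ : 0 < m₁) (hm₂ : 0 < m₂)
    (hγ₁ : 1 < γ₁) (hγ₁' : γ₁ ≤ 2) (hγ₂ : 1 < γ₂) (hγ₂' : γ₂ ≤ 2)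
    (hlb : 0 < lb) (hlu : lb ≤ ub) :
    ∃ C : ℝ, 0 < C ∧
      ∀ n₁ n₂ ν₁ ν₂ : ℝ, lb ≤ n₁ → n₁ ≤ ub → lb ≤ n₂ → n₂ ≤ ub →
        0 ≤ ν₁ → 0 ≤ ν₂ → 0 < m₁ * ν₁ + m₂ * ν₂ →
        (n₁ / (m₁ * n₁ + m₂ * n₂) - ν₁ / (m₁ * ν₁ + m₂ * ν₂)) ^ 2 *
            (m₁ * ν₁ + m₂ * ν₂) ≤
          C * (sRel n m₁ γ₁ ν₁ n₁ + sRel n m₂ γ₂ ν₂ n₂) ∧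
        (n₂ / (m₁ * n₁ + m₂ * n₂) - ν₂ / (m₁ * ν₁ + m₂ * ν₂)) ^ 2 *
            (m₁ * ν₁ + m₂ * ν₂) ≤
          C * (sRel n m₁ γ₁ ν₁ n₁ + sRel n m₂ γ₂ ν₂ n₂) :=
  density_fraction_difference_le_relative_pressure_general n m₁ m₂ γ₁ γ₂ lb ub hm₁ hm₂ hγ₁ hγ₁' hγ₂
    hγ₂' hlb hlu
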